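/- arXiv:2410.11676 — 2 statements merged into one kernel-verified Lean document; each statement's English description precedes it below -/
import Mathlib

section
/- Let A and G be symmetric positive semidefinite n×n real matrices with A ⪯ G (Loewner order), and let u ∈ ℝⁿ with (G−A)u ≠ 0. Define G₊ = G − ((G−A)u uᵀ(G−A))/(uᵀ(G−A)u). Then A ⪯ G₊ ⪯ G. -/
/-!
Put `E = G - A ⪰ 0`, `w = E u` and `c = uᵀ E u`. Then `G - G₊ = c⁻¹ w wᵀ ⪰ 0`, and
`zᵀ (G₊ - A) z = zᵀ E z - c⁻¹ (wᵀ z)²`, which is nonnegative by the Cauchy–Schwarz inequality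
`(zᵀ E u)² ≤ (zᵀ E z)(uᵀ E u)` for the semi-inner product defined by `E`.
-/

open Matrix

section QuadraticForm

variable {ι : Type*} [Fintype ι] {E : Matrix ι ι ℝ}

theorem Matrix.IsSymm.dotProduct_mulVec_comm (hE : E.IsSymm) (x y : ι → ℝ) :
    y ⬝ᵥ E *ᵥ x = x ⬝ᵥ E *ᵥ y := by
  rw [dotProduct_mulVec, dotProduct_comm, ← vecMul_transpose, hE.eq]

theorem Matrix.IsSymm.dotProduct_mulVec_add_smul (hE : E.IsSymm) (x y : ι → ℝ) (t : ℝ) :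
    (x + t • y) ⬝ᵥ E *ᵥ (x + t • y) =
      (y ⬝ᵥ E *ᵥ y) * (t * t) + 2 * (x ⬝ᵥ E *ᵥ y) * t + x ⬝ᵥ E *ᵥ x := by
  simp only [mulVec_add, mulVec_smul, dotProduct_add, add_dotProduct, dotProduct_smul,
    smul_dotProduct, smul_eq_mul, hE.dotProduct_mulVec_comm x y]
  ring

theorem Matrix.PosSemidef.sq_dotProduct_mulVec_le (hE : E.PosSemidef) (x y : ι → ℝ) :
    (x ⬝ᵥ E *ᵥ y) ^ 2 ≤ (x ⬝ᵥ E *ᵥ x) * (y ⬝ᵥ E *ᵥ y) := by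
  have hquad (t : ℝ) :
      0 ≤ (y ⬝ᵥ E *ᵥ y) * (t * t) + 2 * (x ⬝ᵥ E *ᵥ y) * t + x ⬝ᵥ E *ᵥ x := by
    rw [← (isHermitian_iff_isSymm.mp hE.isHermitian).dotProduct_mulVec_add_smul]
    simpa using hE.dotProduct_mulVec_nonneg (x + t • y)
  have hdisc := discrim_le_zero hquad
  rw [discrim] at hdisc
  linarith

theorem dotProduct_smul_vecMulVec_self_mulVec (a : ℝ) (w z : ι → ℝ) :
    z ⬝ᵥ (a • vecMulVec w w) *ᵥ z = a * (w ⬝ᵥ z) ^ 2 := by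
  simp only [smul_mulVec, vecMulVec_mulVec, op_smul_eq_smul, dotProduct_smul, smul_eq_mul,
    dotProduct_comm z w, sq]

theorem Matrix.PosSemidef.inv_mul_sq_dotProduct_mulVec_le (hE : E.PosSemidef) (u z : ι → ℝ) :
    (u ⬝ᵥ E *ᵥ u)⁻¹ * (E *ᵥ u ⬝ᵥ z) ^ 2 ≤ z ⬝ᵥ E *ᵥ z := by
  refine inv_mul_le_of_le_mul₀ (by simpa using hE.dotProduct_mulVec_nonneg u)
    (by simpa using hE.dotProduct_mulVec_nonneg z) ?_
  rw [dotProduct_comm, mul_comm]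
  exact hE.sq_dotProduct_mulVec_le z u

end QuadraticForm

theorem stmt_0_general {n : ℕ} (A G : Matrix (Fin n) (Fin n) ℝ)
    (hA : A.PosSemidef) (hG : G.PosSemidef)
    (hAG : ∀ z : Fin n → ℝ, 0 ≤ z ⬝ᵥ ((G - A) *ᵥ z))
    (u : Fin n → ℝ)
    (Gp : Matrix (Fin n) (Fin n) ℝ)
    (hGp : Gp = G - (u ⬝ᵥ ((G - A) *ᵥ u))⁻¹ •
      vecMulVec ((G - A) *ᵥ u) ((G - A) *ᵥ u)) :
    (∀ z : Fin n → ℝ, 0 ≤ z ⬝ᵥ ((Gp - A) *ᵥ z)) ∧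
    (∀ z : Fin n → ℝ, 0 ≤ z ⬝ᵥ ((G - Gp) *ᵥ z)) := by
  have hE : (G - A).PosSemidef :=
    .of_dotProduct_mulVec_nonneg (hG.isHermitian.sub hA.isHermitian) (by simpa using hAG)
  subst hGp
  refine ⟨fun z => ?_, fun z => ?_⟩
  · rw [sub_right_comm, sub_mulVec, dotProduct_sub, dotProduct_smul_vecMulVec_self_mulVec]
    exact sub_nonneg.mpr (hE.inv_mul_sq_dotProduct_mulVec_le u z)
  · rw [sub_sub_cancel, dotProduct_smul_vecMulVec_self_mulVec]
    exact mul_nonneg (inv_nonneg.mpr (hAG u)) (sq_nonneg _)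

/-- SR1 update preserves the Loewner order: if `0 ⪯ A ⪯ G` and `(G - A) u ≠ 0`, then
for `G₊ = G - ((G-A)u uᵀ(G-A)) / (uᵀ(G-A)u)` we have `A ⪯ G₊ ⪯ G`. -/
theorem stmt_0 {n : ℕ} (A G : Matrix (Fin n) (Fin n) ℝ)
    (hA : A.PosSemidef) (hG : G.PosSemidef)
    (hAG : ∀ z : Fin n → ℝ, 0 ≤ z ⬝ᵥ ((G - A) *ᵥ z))
    (u : Fin n → ℝ) (hu : (G - A) *ᵥ u ≠ 0)
    (Gp : Matrix (Fin n) (Fin n) ℝ)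
    (hGp : Gp = G - (u ⬝ᵥ ((G - A) *ᵥ u))⁻¹ •
      vecMulVec ((G - A) *ᵥ u) ((G - A) *ᵥ u)) :
    (∀ z : Fin n → ℝ, 0 ≤ z ⬝ᵥ ((Gp - A) *ᵥ z)) ∧
    (∀ z : Fin n → ℝ, 0 ≤ z ⬝ᵥ ((G - Gp) *ᵥ z)) :=
  stmt_0_general A G hA hG hAG u Gp hGp
end

section
/- Let f : ℝⁿ → ℝ be μ-strongly convex and twice differentiable, g : ℝⁿ → ℝ ∪ {+∞} proper convex lsc, and F = g + f. Let G̃ be symmetric with G̃ ⪰ J where J = ∫₀¹ ∇²f(x + t u)dt and u = x₊ − x. Suppose x₊ satisfies the optimality condition 0 ∈ ∂g(x₊) + ∇f(x) + G̃ u. Then F(x₊) − F(x) ≤ −(μ/2)‖u‖². -/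
open scoped RealInnerProductSpace

/-!
Strong convexity of `f` at `x₊` bounds `f x₊ - f x` by `⟪∇f(x₊), u⟫ - (μ/2)‖u‖²`. By the
fundamental theorem of calculus along the segment, `∇f(x₊) - ∇f(x) = J u`, so
`⟪∇f(x₊), u⟫ ≤ ⟪∇f(x), u⟫ + ⟪G̃ u, u⟫` because `G̃ ⪰ J`. The right-hand side is exactly what the
subgradient inequality for `-∇f(x) - G̃ u ∈ ∂g(x₊)`, tested at `x`, gives as a bound for
`g x - g x₊`, and adding the two estimates proves the claim.
-/

section FirstOrder

variable {E : Type*} [NormedAddCommGroup E] [NormedSpace ℝ E]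

theorem ConvexOn.add_fderiv_sub_le {φ : E → ℝ} {φ' : E →L[ℝ] ℝ} {p : E}
    (hφ : ConvexOn ℝ Set.univ φ) (hd : HasFDerivAt φ φ' p) (q : E) :
    φ p + φ' (q - p) ≤ φ q := by
  have hline : ConvexOn ℝ Set.univ (φ ∘ AffineMap.lineMap (k := ℝ) p q) := by
    simpa using hφ.comp_affineMap (AffineMap.lineMap p q)
  have hderiv : HasDerivAt (φ ∘ AffineMap.lineMap (k := ℝ) p q) (φ' (q - p)) 0 :=
    hd.comp_hasDerivAt_of_eq 0 AffineMap.hasDerivAt_lineMap (by simp)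
  have h := hline.le_slope_of_hasDerivAt (Set.mem_univ 0) (Set.mem_univ 1) one_pos hderiv
  simp only [slope_def_field, Function.comp_apply, AffineMap.lineMap_apply_zero,
    AffineMap.lineMap_apply_one, sub_zero, div_one] at h
  linarith

end FirstOrder

section FirstOrderInner

variable {E : Type*} [NormedAddCommGroup E] [InnerProductSpace ℝ E] [CompleteSpace E]

theorem StrongConvexOn.add_inner_gradient_le {f : E → ℝ} {μ : ℝ} {p g : E}
    (hf : StrongConvexOn Set.univ μ f) (hg : HasGradientAt f g p) (q : E) :
    f p + ⟪g, q - p⟫ + μ / 2 * ‖q - p‖ ^ 2 ≤ f q := by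
  have hφ' : HasFDerivAt (fun x => f x - μ / 2 * ‖x‖ ^ 2)
      (InnerProductSpace.toDual ℝ E g - (μ / 2) • (2 • innerSL ℝ p)) p :=
    hg.hasFDerivAt.sub ((hasStrictFDerivAt_norm_sq p).hasFDerivAt.const_mul (μ / 2))
  have h := (strongConvexOn_iff_convex.mp hf).add_fderiv_sub_le hφ' q
  simp only [sub_apply, smul_apply,
    InnerProductSpace.toDual_apply_apply, innerSL_apply_apply, smul_eq_mul, nsmul_eq_mul] at h
  have hsq : ‖q - p‖ ^ 2 = ‖q‖ ^ 2 - 2 * ⟪p, q⟫ + ‖p‖ ^ 2 := by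
    rw [norm_sub_sq_real, real_inner_comm]
  have hin : ⟪p, q - p⟫ = ⟪p, q⟫ - ‖p‖ ^ 2 := by
    rw [inner_sub_right, real_inner_self_eq_norm_sq]
  rw [hsq]
  rw [hin] at h
  linarith

end FirstOrderInner

section MeanValue

variable {E F : Type*} [NormedAddCommGroup E] [NormedSpace ℝ E]
  [NormedAddCommGroup F] [NormedSpace ℝ F] [CompleteSpace F]

theorem intervalIntegral_fderiv_comp_line_apply {G : E → F} {G' : E → E →L[ℝ] F}
    (hG : ∀ y, HasFDerivAt G (G' y) y) (hG' : Continuous G') (x u : E) :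
    (∫ t in (0 : ℝ)..1, G' (x + t • u)) u = G (x + u) - G x := by
  have hline : Continuous fun t : ℝ => x + t • u := by fun_prop
  have hderiv : ∀ t : ℝ, HasDerivAt (fun s : ℝ => G (x + s • u)) (G' (x + t • u) u) t := by
    intro t
    have hlin : HasDerivAt (fun s : ℝ => x + s • u) u t := by
      simpa using ((hasDerivAt_id t).smul_const u).const_add x
    exact (hG (x + t • u)).comp_hasDerivAt t hlin
  have hint : IntervalIntegrable (fun t : ℝ => G' (x + t • u)) MeasureTheory.volume 0 1 :=
    (hG'.comp hline).intervalIntegrable 0 1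
  rw [ContinuousLinearMap.intervalIntegral_apply hint,
    intervalIntegral.integral_eq_sub_of_hasDerivAt (fun t _ => hderiv t)
      ((hG'.comp hline).clm_apply continuous_const |>.intervalIntegrable 0 1)]
  simp

end MeanValue

theorem EReal.add_coe_add_coe_le {a b : EReal} {r m c s : ℝ}
    (hab : a + (c : EReal) ≤ b) (hrm : r + m ≤ c + s) :
    a + (r : EReal) + (m : EReal) ≤ b + (s : EReal) :=
  calc a + (r : EReal) + (m : EReal) = a + ((r + m : ℝ) : EReal) := by
        rw [add_assoc, EReal.coe_add]
    _ ≤ a + ((c + s : ℝ) : EReal) := by gcongr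
    _ = a + (c : EReal) + (s : EReal) := by rw [EReal.coe_add, add_assoc]
    _ ≤ b + (s : EReal) := by gcongr

theorem stmt_13_general {n : ℕ} (μ : ℝ)
    (f : EuclideanSpace ℝ (Fin n) → ℝ)
    (f' : EuclideanSpace ℝ (Fin n) → EuclideanSpace ℝ (Fin n))
    (Hess : EuclideanSpace ℝ (Fin n) →
      (EuclideanSpace ℝ (Fin n) →L[ℝ] EuclideanSpace ℝ (Fin n)))
    (hf : ∀ y, HasGradientAt f (f' y) y)
    (hf' : ∀ y, HasFDerivAt f' (Hess y) y)
    (hcont : Continuous Hess)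
    (hsc : StrongConvexOn Set.univ μ f)
    (g : EuclideanSpace ℝ (Fin n) → EReal)
    (x xp : EuclideanSpace ℝ (Fin n))
    (Gt : EuclideanSpace ℝ (Fin n) →L[ℝ] EuclideanSpace ℝ (Fin n))
    (hGJ : ∀ v : EuclideanSpace ℝ (Fin n),
      ⟪(∫ t in (0:ℝ)..1, Hess (x + t • (xp - x))) v, v⟫ ≤ ⟪Gt v, v⟫)
    -- optimality condition: `-∇f(x) - G̃ u ∈ ∂g(x₊)`
    (hopt : ∀ z, g xp + ((⟪-(f' x) - Gt (xp - x), z - xp⟫ : ℝ) : EReal) ≤ g z) :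
    g xp + (f xp : EReal) + ((μ / 2 * ‖xp - x‖ ^ 2 : ℝ) : EReal) ≤
      g x + (f x : EReal) := by
  have hstrong := hsc.add_inner_gradient_le (hf xp) x
  rw [← neg_sub xp x, norm_neg, inner_neg_right] at hstrong
  have hmean := intervalIntegral_fderiv_comp_line_apply hf' hcont x (xp - x)
  rw [add_sub_cancel] at hmean
  have hJ : ⟪f' xp - f' x, xp - x⟫ ≤ ⟪Gt (xp - x), xp - x⟫ := hmean ▸ hGJ (xp - x)
  refine EReal.add_coe_add_coe_le (hopt x) ?_
  rw [inner_sub_left] at hJ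
  rw [← neg_sub xp x, inner_neg_right, inner_sub_left, inner_neg_left]
  linarith

/-- Descent lemma: if `f` is `μ`-strongly convex and twice differentiable, `g` proper
convex lsc, `F = g + f`, `G̃ ⪰ J = ∫₀¹ ∇²f(x + tu) dt` and `x₊` satisfies the optimality
condition `0 ∈ ∂g(x₊) + ∇f(x) + G̃ u` with `u = x₊ - x`, then
`F(x₊) - F(x) ≤ -(μ/2)‖u‖²`. -/
theorem stmt_13 {n : ℕ} (μ : ℝ) (hμ : 0 < μ)
    (f : EuclideanSpace ℝ (Fin n) → ℝ)
    (f' : EuclideanSpace ℝ (Fin n) → EuclideanSpace ℝ (Fin n))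
    (Hess : EuclideanSpace ℝ (Fin n) →
      (EuclideanSpace ℝ (Fin n) →L[ℝ] EuclideanSpace ℝ (Fin n)))
    (hf : ∀ y, HasGradientAt f (f' y) y)
    (hf' : ∀ y, HasFDerivAt f' (Hess y) y)
    (hcont : Continuous Hess)
    (hsc : StrongConvexOn Set.univ μ f)
    (g : EuclideanSpace ℝ (Fin n) → EReal)
    (hproper : ∃ z, g z ≠ ⊤) (hnotbot : ∀ z, g z ≠ ⊥)
    (hlsc : LowerSemicontinuous g)
    (hconv : ∀ a b : EuclideanSpace ℝ (Fin n), ∀ t : ℝ, 0 ≤ t → t ≤ 1 →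
      g (t • a + (1 - t) • b) ≤ (t : EReal) * g a + ((1 - t : ℝ) : EReal) * g b)
    (x xp : EuclideanSpace ℝ (Fin n))
    (Gt : EuclideanSpace ℝ (Fin n) →L[ℝ] EuclideanSpace ℝ (Fin n))
    (hGsym : ∀ a b, ⟪Gt a, b⟫ = ⟪a, Gt b⟫)
    (hGJ : ∀ v : EuclideanSpace ℝ (Fin n),
      ⟪(∫ t in (0:ℝ)..1, Hess (x + t • (xp - x))) v, v⟫ ≤ ⟪Gt v, v⟫)
    -- optimality condition: `-∇f(x) - G̃ u ∈ ∂g(x₊)`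
    (hopt : ∀ z, g xp + ((⟪-(f' x) - Gt (xp - x), z - xp⟫ : ℝ) : EReal) ≤ g z) :
    g xp + (f xp : EReal) + ((μ / 2 * ‖xp - x‖ ^ 2 : ℝ) : EReal) ≤
      g x + (f x : EReal) :=
  stmt_13_general μ f f' Hess hf hf' hcont hsc g x xp Gt hGJ hopt
end
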